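/- arXiv:1311.2242 — 4 statements merged into one kernel-verified Lean document; each statement's English description precedes it below -/
import Mathlib

section
/- Let p be an odd prime. Then p is a Wilson prime if and only if B_{p-1} − 1 + 1/p ≡ 0 (mod p), i.e. the rational number B_{p-1} − 1 + 1/p equals p·(a/b) for some integers a, b with p ∤ b. -/
open Finset

/-- `x ≡ y (mod p^k)` for rationals: `x - y = p^k * (c/d)` with `p ∤ d`. -/
def ratCongr (p k : ℕ) (x y : ℚ) : Prop :=
  ∃ c d : ℤ, ¬ (p : ℤ) ∣ d ∧ x - y = (p : ℚ) ^ k * ((c : ℚ) / (d : ℚ))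

/-- The Wilson quotient `W_p = ((p-1)! + 1)/p` (an integer by Wilson's theorem). -/
def wilsonQuotient (p : ℕ) : ℤ := ((Nat.factorial (p - 1) : ℤ) + 1) / p

/-- The Fermat quotient `q_p(a) = (a^(p-1) - 1)/p` (an integer for `p ∤ a`). -/
def fermatQuotient (p a : ℕ) : ℤ := ((a : ℤ) ^ (p - 1) - 1) / p

/-- A prime `p` is a Wilson prime if `p ∣ W_p`. -/
def IsWilsonPrime (p : ℕ) : Prop := (p : ℤ) ∣ wilsonQuotient p

/-- A prime `p` is a Lerch prime if `∑_{a=1}^{p-1} q_p(a) ≡ W_p (mod p²)`. -/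
def IsLerchPrime (p : ℕ) : Prop :=
  (p : ℤ) ^ 2 ∣ (∑ a ∈ Icc 1 (p - 1), fermatQuotient p a) - wilsonQuotient p

/-- The harmonic number `H_a = ∑_{k=1}^{a} 1/k`. -/
def harmonicNum (a : ℕ) : ℚ := ∑ k ∈ Icc 1 a, (1 : ℚ) / k

/-- The generalized harmonic number `H_{a,2} = ∑_{k=1}^{a} 1/k²`. -/
def harmonicNum2 (a : ℕ) : ℚ := ∑ k ∈ Icc 1 a, (1 : ℚ) / (k : ℚ) ^ 2

/-!
Faulhaber's formula writes `∑_{k<p} k^(p-1)` as `p B_{p-1}` plus the terms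
`B_i C(p,i) p^(p-1-i)` for `i < p - 1`; these are divisible by `p²`, because `B_i` is `p`-integral
for `i < p - 1` and `p ∣ C(p,i)` for `0 < i < p`. On the other hand, since every `k^(p-1)` is
`≡ 1 (mod p)`, the sum `∑_{0<k<p} (k^(p-1) - 1)` is `≡ ∏_{0<k<p} k^(p-1) - 1 = ((p-1)!)^(p-1) - 1
(mod p²)`, and `(p-1)! = p W_p - 1` with `p - 1` even gives Lerch's congruence
`∑_{0<k<p} k^(p-1) ≡ p - 1 + p W_p (mod p²)`. Comparing, `B_{p-1} - 1 + 1/p ≡ W_p (mod p)`, so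
the left side vanishes mod `p` exactly when `W_p` does.
-/

open scoped Nat

lemma IsUltrametricDist.norm_le_iff_of_norm_sub_le {E : Type*} [SeminormedAddCommGroup E]
    [IsUltrametricDist E] {x y : E} {r : ℝ} (h : ‖x - y‖ ≤ r) : ‖x‖ ≤ r ↔ ‖y‖ ≤ r := by
  constructor
  · intro hx
    calc ‖y‖ = ‖(y - x) + x‖ := by rw [sub_add_cancel]
      _ ≤ r := (norm_add_le_max _ _).trans (max_le (norm_sub_rev x y ▸ h) hx)
  · intro hy
    calc ‖x‖ = ‖(x - y) + y‖ := by rw [sub_add_cancel]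
      _ ≤ r := (norm_add_le_max _ _).trans (max_le h hy)

lemma sq_dvd_prod_sub_one_sub_sum {ι : Type*} {m : ℤ} (s : Finset ι) (x : ι → ℤ)
    (hx : ∀ i ∈ s, m ∣ x i - 1) : m ^ 2 ∣ ∏ i ∈ s, x i - 1 - ∑ i ∈ s, (x i - 1) := by
  classical
  suffices m ∣ ∏ i ∈ s, x i - 1 ∧ m ^ 2 ∣ ∏ i ∈ s, x i - 1 - ∑ i ∈ s, (x i - 1) from this.2
  induction s using Finset.induction with
  | empty => simp
  | insert a s ha ih =>
    obtain ⟨hP, hS⟩ := ih fun i hi => hx i (mem_insert_of_mem hi)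
    have hxa := hx a (mem_insert_self a s)
    rw [prod_insert ha, sum_insert ha]
    set P := ∏ i ∈ s, x i
    set S := ∑ i ∈ s, (x i - 1)
    constructor
    · rw [show x a * P - 1 = (x a - 1) * P + (P - 1) by ring]
      exact dvd_add (dvd_mul_of_dvd_left hxa P) hP
    · rw [show x a * P - 1 - (x a - 1 + S) = (x a - 1) * (P - 1) + (P - 1 - S) by ring]
      exact dvd_add (sq m ▸ mul_dvd_mul hxa hP) hS

lemma Nat.Prime.sq_dvd_choose_mul_pow {p : ℕ} (hp : p.Prime) (hp3 : 3 ≤ p) {i : ℕ}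
    (hi : i < p - 1) : p ^ 2 ∣ p.choose i * p ^ (p - 1 - i) := by
  rcases Nat.eq_zero_or_pos i with rfl | hi0
  · simpa using Nat.pow_dvd_pow p (by omega : 2 ≤ p - 1 - 0)
  · rw [sq]
    exact mul_dvd_mul (hp.dvd_choose_self hi0.ne' (by omega)) (dvd_pow_self p (by omega))

section

variable {p : ℕ} [hp : Fact p.Prime]

lemma not_dvd_den_of_norm_le_one {r : ℚ} (h : ‖(r : ℚ_[p])‖ ≤ 1) : ¬ p ∣ r.den := by
  have hden := PadicInt.isUnit_iff.mp (PadicInt.isUnit_den r h)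
  rw [PadicInt.norm_natCast_eq_one_iff] at hden
  exact (Nat.Prime.coprime_iff_not_dvd hp.out).mp hden

lemma ratCongr_one_zero_iff (x : ℚ) : ratCongr p 1 x 0 ↔ ‖(x : ℚ_[p])‖ ≤ (p : ℝ)⁻¹ := by
  have hp0 : (p : ℚ) ≠ 0 := Nat.cast_ne_zero.mpr hp.out.ne_zero
  constructor
  · rintro ⟨c, d, hd, hx⟩
    rw [sub_zero, pow_one] at hx
    have hd1 : ‖(d : ℚ_[p])‖ = 1 :=
      le_antisymm (Padic.norm_int_le_one d) (not_lt.mp (mt Padic.norm_intCast_lt_one_iff.mp hd))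
    rw [hx]
    push_cast
    rw [norm_mul, norm_div, hd1, div_one, Padic.norm_p]
    exact mul_le_of_le_one_right (by positivity) (Padic.norm_int_le_one c)
  · intro hx
    set y := x / p
    have hy : ‖(y : ℚ_[p])‖ ≤ 1 := by
      push_cast [y]
      rw [norm_div, Padic.norm_p, div_inv_eq_mul]
      calc ‖(x : ℚ_[p])‖ * p ≤ (p : ℝ)⁻¹ * p := by gcongr
        _ = 1 := inv_mul_cancel₀ (by exact_mod_cast hp0)
    refine ⟨y.num, y.den, by exact_mod_cast not_dvd_den_of_norm_le_one hy, ?_⟩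
    rw [sub_zero, pow_one, Int.cast_natCast, Rat.num_div_den]
    exact (mul_div_cancel₀ x hp0).symm

lemma norm_intCast_le_inv_pow_iff (z : ℤ) (k : ℕ) :
    ‖(z : ℚ_[p])‖ ≤ (p : ℝ)⁻¹ ^ k ↔ (p : ℤ) ^ k ∣ z := by
  rw [← Padic.norm_int_le_pow_iff_dvd, zpow_neg, zpow_natCast, inv_pow]

lemma norm_bernoulli_le_one {m : ℕ} (hm : m + 1 < p) : ‖(bernoulli m : ℚ_[p])‖ ≤ 1 := by
  induction m using Nat.strong_induction_on with
  | _ m ih =>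
    rcases Nat.eq_zero_or_pos m with rfl | hm0
    · simp
    -- the recursion `∑_{k ≤ m} C(m+1,k) B_k = 0` only divides by `m + 1`, a unit since `m + 1 < p`
    have hrec : (bernoulli m : ℚ) =
        -(∑ k ∈ range m, ((m + 1).choose k : ℚ) * bernoulli k) / (m + 1) := by
      have hs := sum_bernoulli (m + 1)
      rw [if_neg (by omega), sum_range_succ, Nat.choose_succ_self_right] at hs
      rw [eq_div_iff (by positivity)]
      push_cast at hs
      linear_combination hs
    have hden : ‖((m + 1 : ℕ) : ℚ_[p])‖ = 1 := Padic.norm_natCast_eq_one_iff.mpr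
      ((Nat.Prime.coprime_iff_not_dvd hp.out).mpr (Nat.not_dvd_of_pos_of_lt m.succ_pos hm))
    rw [hrec]
    push_cast at hden ⊢
    rw [norm_div, norm_neg, hden, div_one]
    refine IsUltrametricDist.norm_sum_le_of_forall_le_of_nonneg zero_le_one fun k hk => ?_
    have hk := mem_range.mp hk
    rw [norm_mul]
    exact mul_le_one₀ (by exact_mod_cast Padic.norm_int_le_one ((m + 1).choose k : ℤ))
      (norm_nonneg _) (ih k hk (by omega))

lemma norm_sum_range_pow_sub_mul_bernoulli_le (hp3 : 3 ≤ p) :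
    ‖((∑ k ∈ range p, (k : ℚ) ^ (p - 1) - p * bernoulli (p - 1) : ℚ) : ℚ_[p])‖ ≤
      (p : ℝ)⁻¹ ^ 2 := by
  have h1p := hp.out.one_le
  have hp0 : (p : ℚ) ≠ 0 := Nat.cast_ne_zero.mpr hp.out.ne_zero
  have hfaulhaber : ∑ k ∈ range p, (k : ℚ) ^ (p - 1) - p * bernoulli (p - 1) =
      ∑ i ∈ range (p - 1), bernoulli i * (p.choose i * p ^ (p - 1 - i) : ℕ) := by
    rw [sum_range_pow, Nat.sub_add_cancel h1p, Nat.cast_sub h1p]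
    nth_rw 1 [← Nat.sub_add_cancel h1p]
    rw [sum_range_succ, Nat.sub_sub_self h1p, Nat.choose_symm h1p, Nat.choose_one_right,
      Nat.cast_one, sub_add_cancel, add_sub_assoc, pow_one, mul_div_cancel_right₀ _ hp0,
      mul_comm _ (p : ℚ), sub_self, add_zero]
    refine sum_congr rfl fun i hi => ?_
    rw [show p - i = p - 1 - i + 1 by have := mem_range.mp hi; omega, pow_succ]
    push_cast
    field_simp
  rw [hfaulhaber]
  push_cast
  refine IsUltrametricDist.norm_sum_le_of_forall_le_of_nonneg (by positivity) fun i hi => ?_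
  have hi := mem_range.mp hi
  rw [norm_mul, ← one_mul ((p : ℝ)⁻¹ ^ 2)]
  refine mul_le_mul (norm_bernoulli_le_one (by omega)) ?_ (norm_nonneg _) zero_le_one
  exact_mod_cast (norm_intCast_le_inv_pow_iff _ 2).mpr
    (by exact_mod_cast hp.out.sq_dvd_choose_mul_pow hp3 hi)

lemma mul_wilsonQuotient : (p : ℤ) * wilsonQuotient p = (p - 1)! + 1 := by
  have hdvd : (p : ℤ) ∣ (p - 1)! + 1 := by
    rw [← ZMod.intCast_zmod_eq_zero_iff_dvd]
    push_cast
    rw [ZMod.wilsons_lemma, neg_add_cancel]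
  rw [wilsonQuotient, Int.mul_ediv_cancel' hdvd]

lemma sq_dvd_sum_pow_sub_sub_mul_wilsonQuotient (hodd : Odd p) :
    (p : ℤ) ^ 2 ∣ ∑ k ∈ Ico 1 p, (k : ℤ) ^ (p - 1) - (p - 1) - p * wilsonQuotient p := by
  set W := wilsonQuotient p
  have h1p := hp.out.one_le
  have hfermat : ∀ k ∈ Ico 1 p, (p : ℤ) ∣ (k : ℤ) ^ (p - 1) - 1 := fun k hk => by
    obtain ⟨hk0, hkp⟩ := mem_Ico.mp hk
    refine (Int.ModEq.pow_card_sub_one_eq_one hp.out (Nat.isCoprime_iff_coprime.mpr ?_)).symm.dvd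
    exact ((Nat.Prime.coprime_iff_not_dvd hp.out).mpr (Nat.not_dvd_of_pos_of_lt hk0 hkp)).symm
  have hprod : ∏ k ∈ Ico 1 p, (k : ℤ) ^ (p - 1) = (1 + -(p * W)) ^ (p - 1) := by
    have hfact := prod_Ico_id_eq_factorial (p - 1)
    rw [Nat.sub_add_cancel h1p] at hfact
    rw [prod_pow, ← Nat.cast_prod, hfact, ← (Nat.Odd.sub_odd hodd odd_one).neg_pow]
    congr 1
    linear_combination (mul_wilsonQuotient (p := p))
  have hbinom : (p : ℤ) ^ 2 ∣ (1 + -(p * W)) ^ (p - 1) - 1 + (p - 1) * (p * W) := by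
    have h := sq_dvd_add_pow_sub_sub (-(p * W : ℤ)) 1 (p - 1)
    rw [one_pow, one_pow, Nat.cast_sub h1p, neg_sq] at h
    refine (pow_dvd_pow_of_dvd (dvd_mul_right _ W) 2).trans ?_
    convert h using 1
    ring
  have hcard : ∑ k ∈ Ico 1 p, ((k : ℤ) ^ (p - 1) - 1) =
      ∑ k ∈ Ico 1 p, (k : ℤ) ^ (p - 1) - (p - 1) := by
    rw [sum_sub_distrib, sum_const, Nat.card_Ico, nsmul_one, Nat.cast_sub h1p, Nat.cast_one]
  have hlin := sq_dvd_prod_sub_one_sub_sum _ _ hfermat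
  rw [hprod, hcard] at hlin
  set Q := (1 + -(p * W : ℤ)) ^ (p - 1)
  set S := ∑ k ∈ Ico 1 p, (k : ℤ) ^ (p - 1)
  rw [show S - (p - 1) - p * W =
    (Q - 1 + (p - 1) * (p * W)) - (Q - 1 - (S - (p - 1))) - p ^ 2 * W by ring]
  exact (hbinom.sub hlin).sub (dvd_mul_right _ W)

lemma norm_bernoulli_sub_wilsonQuotient_le (hodd : Odd p) :
    ‖((bernoulli (p - 1) - 1 + 1 / p - wilsonQuotient p : ℚ) : ℚ_[p])‖ ≤ (p : ℝ)⁻¹ := by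
  have hp3 : 3 ≤ p := by
    have := hp.out.two_le
    have : p ≠ 2 := by rintro rfl; exact absurd hodd (by decide)
    omega
  have hfaulhaber := norm_sum_range_pow_sub_mul_bernoulli_le hp3
  rw [sum_range_eq_add_Ico _ hp.out.pos, Nat.cast_zero, zero_pow (by omega), zero_add]
    at hfaulhaber
  have hlerch := (norm_intCast_le_inv_pow_iff _ 2).mpr
    (sq_dvd_sum_pow_sub_sub_mul_wilsonQuotient hodd)
  have key : (p : ℚ) * (bernoulli (p - 1) - 1 + 1 / p - wilsonQuotient p) =
      ((∑ k ∈ Ico 1 p, (k : ℤ) ^ (p - 1) - (p - 1) - p * wilsonQuotient p : ℤ) : ℚ) +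
      -(∑ k ∈ Ico 1 p, (k : ℚ) ^ (p - 1) - p * bernoulli (p - 1)) := by
    push_cast
    field_simp
    ring
  have hmul : ‖(((p : ℚ) * (bernoulli (p - 1) - 1 + 1 / p - wilsonQuotient p) : ℚ) : ℚ_[p])‖ ≤
      (p : ℝ)⁻¹ ^ 2 := by
    rw [key, Rat.cast_add, Rat.cast_neg, Rat.cast_intCast]
    exact (IsUltrametricDist.norm_add_le_max _ _).trans (max_le hlerch (by rwa [norm_neg]))
  rw [Rat.cast_mul, norm_mul, Rat.cast_natCast, Padic.norm_p, sq] at hmul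
  exact le_of_mul_le_mul_left hmul (by positivity)

end

theorem stmt_1 (p : ℕ) (hp : p.Prime) (hodd : Odd p) :
    IsWilsonPrime p ↔ ratCongr p 1 (bernoulli (p - 1) - 1 + 1 / (p : ℚ)) 0 := by
  have := Fact.mk hp
  rw [IsWilsonPrime, ratCongr_one_zero_iff, ← pow_one (p : ℤ), ← norm_intCast_le_inv_pow_iff,
    pow_one]
  refine (IsUltrametricDist.norm_le_iff_of_norm_sub_le ?_).symm
  simpa using norm_bernoulli_sub_wilsonQuotient_le hodd
end

section
/- Let p be an odd prime that is a Wilson prime. Then B_{2p−2} ≡ B_{p−1} (mod p), i.e. the rational number B_{2p−2} − B_{p−1} equals p·(a/b) for some integers a, b with p ∤ b. -/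
open Finset

/-!
Write `S_n = ∑_{k<p} k^n`. Faulhaber's formula gives
`S_n - p B_n = ∑_{i<n} p B_i C(n,i) p^(n-i)/(n-i+1)`, where every `p B_i` is `p`-integral (by
strong induction on the same formula) and, for `p ≥ 5`, `p^m/(m+1)` is divisible by `p²` once
`m ≥ 2`. For even `n ≥ 4` the only other term, `i = n - 1`, vanishes since `B_{n-1} = 0`, so
`S_n ≡ p B_n (mod p²)`. Hence `p (B_{2p-2} - B_{p-1}) ≡ S_{2p-2} - S_{p-1} (mod p²)`.
Modulo `p²`, the Fermat powers `x_k = k^(p-1) ≡ 1 (mod p)` satisfy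
`∑ (x_k² - x_k) ≡ ∑ (x_k - 1) ≡ ∏ x_k - 1 = ((p-1)!)^(p-1) - 1`, and this vanishes for a Wilson
prime because then `(p-1)! ≡ -1 (mod p²)`.
-/

open Nat

theorem Ideal.prod_sub_one_sub_sum_mem_sq {ι R : Type*} [CommRing R] (I : Ideal R) (s : Finset ι)
    (x : ι → R) (hx : ∀ i ∈ s, x i - 1 ∈ I) :
    ∏ i ∈ s, x i - 1 - ∑ i ∈ s, (x i - 1) ∈ I ^ 2 := by
  classical
  induction s using Finset.induction_on with
  | empty => simp
  | @insert a s ha ih =>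
    rw [Finset.forall_mem_insert] at hx
    have hs := ih hx.2
    have hprod : ∏ i ∈ s, x i - 1 ∈ I := by
      simpa using I.add_mem (Ideal.pow_le_self two_ne_zero hs) (I.sum_mem hx.2)
    rw [Finset.prod_insert ha, Finset.sum_insert ha]
    have key : x a * ∏ i ∈ s, x i - 1 - (x a - 1 + ∑ i ∈ s, (x i - 1)) =
        (x a - 1) * (∏ i ∈ s, x i - 1) + (∏ i ∈ s, x i - 1 - ∑ i ∈ s, (x i - 1)) := by ring
    rw [key, sq]
    exact add_mem (Ideal.mul_mem_mul hx.1 hprod) (sq I ▸ hs)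

theorem Ideal.sum_sq_sub_self_sub_prod_mem_sq {ι R : Type*} [CommRing R] (I : Ideal R)
    (s : Finset ι) (x : ι → R) (hx : ∀ i ∈ s, x i - 1 ∈ I) :
    ∑ i ∈ s, (x i ^ 2 - x i) - (∏ i ∈ s, x i - 1) ∈ I ^ 2 := by
  have key : ∑ i ∈ s, (x i ^ 2 - x i) - (∏ i ∈ s, x i - 1) =
      ∑ i ∈ s, (x i - 1) ^ 2 - (∏ i ∈ s, x i - 1 - ∑ i ∈ s, (x i - 1)) := by
    have hsplit : ∀ i ∈ s, x i ^ 2 - x i = (x i - 1) ^ 2 + (x i - 1) := fun i _ => by ring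
    rw [Finset.sum_congr rfl hsplit, Finset.sum_add_distrib]
    ring
  rw [key]
  exact sub_mem (Ideal.sum_mem _ fun i hi => Ideal.pow_mem_pow (hx i hi) 2)
    (I.prod_sub_one_sub_sum_mem_sq s x hx)

theorem not_isWilsonPrime_three : ¬ IsWilsonPrime 3 := by
  norm_num [IsWilsonPrime, wilsonQuotient, Nat.factorial]

theorem IsWilsonPrime.five_le {p : ℕ} (hp : p.Prime) (hodd : Odd p) (hw : IsWilsonPrime p) :
    5 ≤ p := by
  have := hp.two_le
  by_contra! h
  interval_cases p
  · exact absurd hodd (by decide)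
  · exact not_isWilsonPrime_three hw
  · exact absurd hp (by decide)

theorem IsWilsonPrime.sq_dvd_factorial_add_one {p : ℕ} (hp : p.Prime) (hw : IsWilsonPrime p) :
    (p : ℤ) ^ 2 ∣ (p - 1)! + 1 := by
  have : Fact p.Prime := ⟨hp⟩
  have hwilson : (p : ℤ) ∣ (p - 1)! + 1 := by
    rw [← ZMod.intCast_zmod_eq_zero_iff_dvd]
    push_cast [ZMod.wilsons_lemma]
    ring
  rw [← Int.ediv_mul_cancel hwilson, sq]
  exact mul_dvd_mul_right hw _

theorem IsWilsonPrime.sq_dvd_sum_pow_sub {p : ℕ} (hp : p.Prime) (hodd : Odd p)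
    (hw : IsWilsonPrime p) :
    (p : ℤ) ^ 2 ∣ ∑ k ∈ range p, ((k : ℤ) ^ (2 * p - 2) - (k : ℤ) ^ (p - 1)) := by
  have hp1 : p - 1 + 1 = p := Nat.sub_add_cancel hp.one_le
  have hfermat : ∀ k ∈ Ico 1 p, (k : ℤ) ^ (p - 1) - 1 ∈ Ideal.span {(p : ℤ)} := by
    intro k hk
    rw [Finset.mem_Ico] at hk
    refine Ideal.mem_span_singleton.mpr (Int.prime_dvd_pow_sub_one hp ?_)
    exact Nat.isCoprime_iff_coprime.mpr
      ((Nat.coprime_comm.mp ((hp.coprime_iff_not_dvd).mpr (Nat.not_dvd_of_pos_of_lt hk.1 hk.2))))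
  have hprod : ∏ k ∈ Ico 1 p, (k : ℤ) ^ (p - 1) = ((p - 1)! : ℤ) ^ (p - 1) := by
    rw [Finset.prod_pow, ← Nat.cast_prod, ← prod_Ico_id_eq_factorial, hp1]
  have hfact : (p : ℤ) ^ 2 ∣ ((p - 1)! : ℤ) ^ (p - 1) - 1 := by
    have hwilson : ((p - 1)! : ℤ) ≡ -1 [ZMOD p ^ 2] :=
      (Int.modEq_iff_dvd.mpr (by simpa using hw.sq_dvd_factorial_add_one hp)).symm
    have heven : Even (p - 1) := Nat.Odd.sub_odd hodd odd_one
    simpa [heven.neg_one_pow] using (hwilson.pow (p - 1)).symm.dvd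
  have hsum := Ideal.sum_sq_sub_self_sub_prod_mem_sq _ (Ico 1 p) (fun k => (k : ℤ) ^ (p - 1)) hfermat
  rw [Ideal.span_singleton_pow, Ideal.mem_span_singleton, hprod] at hsum
  have hzero : ∑ k ∈ range p, ((k : ℤ) ^ (2 * p - 2) - (k : ℤ) ^ (p - 1)) =
      ∑ k ∈ Ico 1 p, (((k : ℤ) ^ (p - 1)) ^ 2 - (k : ℤ) ^ (p - 1)) := by
    have hexp : 2 * p - 2 = (p - 1) * 2 := by omega
    have hp0 : p - 1 ≠ 0 := by have := hp.two_le; omega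
    rw [range_eq_Ico, sum_eq_sum_Ico_succ_bot hp.pos, hexp]
    simp [pow_mul, hp0]
  simpa [hzero] using dvd_add hsum hfact

theorem Nat.factorization_succ_add_two_le {p m : ℕ} (hp : 5 ≤ p) (hm : 2 ≤ m) :
    2 + (m + 1).factorization p ≤ m := by
  have hlt : p ^ (m + 1).factorization p < p ^ (m - 1) :=
    calc p ^ (m + 1).factorization p ≤ m + 1 := Nat.ordProj_le p (Nat.succ_ne_zero m)
      _ < 5 * (m - 1) := by omega
      _ ≤ p * (m - 1) := Nat.mul_le_mul_right _ hp
      _ ≤ p ^ (m - 1) := Nat.mul_le_pow (by omega) _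
  have := (Nat.pow_lt_pow_iff_right (by omega)).mp hlt
  omega

theorem sum_range_pow_sub_mul_bernoulli (N n : ℕ) :
    ∑ k ∈ range N, (k : ℚ) ^ n - N * bernoulli n =
      ∑ i ∈ range n, N * bernoulli i * n.choose i * ((N : ℚ) ^ (n - i) / (n - i + 1 : ℕ)) := by
  have hlast : bernoulli n * ((n + 1).choose n : ℕ) * (N : ℚ) ^ (n + 1 - n) / (n + 1) =
      N * bernoulli n := by
    rw [Nat.choose_succ_self_right, Nat.add_sub_cancel_left]
    push_cast
    field_simp
  rw [sum_range_pow, sum_range_succ, hlast, add_sub_cancel_right]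
  refine sum_congr rfl fun i hi => ?_
  have hi : i < n := mem_range.mp hi
  have hchoose : (n.choose i : ℚ) * (n + 1) = (n + 1).choose i * (n - i + 1 : ℕ) := by
    rw [show n - i + 1 = n + 1 - i by omega]
    exact_mod_cast Nat.choose_mul_succ_eq n i
  rw [show n + 1 - i = n - i + 1 by omega, pow_succ]
  field_simp
  linear_combination -(bernoulli i * N ^ (n - i) * N) * hchoose

section PadicValuation

variable {p : ℕ} [Fact p.Prime]

theorem Rat.padicValuation_natCast_le_one (n : ℕ) : Rat.padicValuation p n ≤ 1 := by
  exact_mod_cast Int.padicValuation_le_one p n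

theorem Rat.padicValuation_intCast_le_pow_of_dvd {z : ℤ} {k : ℕ} (h : (p : ℤ) ^ k ∣ z) :
    Rat.padicValuation p z ≤ Rat.padicValuation p p ^ k := by
  obtain ⟨w, rfl⟩ := h
  push_cast
  rw [map_mul, map_pow]
  exact mul_le_of_le_one_right' (Int.padicValuation_le_one p w)

theorem Rat.padicValuation_pow_div_succ_le {m j : ℕ} (h : j + (m + 1).factorization p ≤ m) :
    Rat.padicValuation p ((p : ℚ) ^ m / (m + 1 : ℕ)) ≤ Rat.padicValuation p p ^ j := by
  have hp : p.Prime := Fact.out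
  have hcompl : Rat.padicValuation p (ordCompl[p] (m + 1) : ℕ) = 1 := by
    rw [← Int.cast_natCast, Rat.padicValuation_cast, Int.padicValuation_eq_one_iff,
      Int.natCast_dvd_natCast]
    exact Nat.not_dvd_ordCompl hp (Nat.succ_ne_zero m)
  have hne : Rat.padicValuation p p ≠ 0 := by simp
  rw [← Nat.ordProj_mul_ordCompl_eq_self (m + 1) p, Nat.cast_mul, map_div₀, map_mul, hcompl,
    mul_one, Nat.cast_pow, map_pow, map_pow, div_eq_mul_inv, ← pow_sub₀ _ hne (by omega)]
  exact pow_le_pow_right_of_le_one' (Rat.padicValuation_natCast_le_one p) (by omega)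

theorem ratCongr_of_padicValuation_sub_le {k : ℕ} {x y : ℚ}
    (h : Rat.padicValuation p (x - y) ≤ Rat.padicValuation p p ^ k) : ratCongr p k x y := by
  have hpk : (p : ℚ) ^ k ≠ 0 := pow_ne_zero _ (Nat.cast_ne_zero.mpr (Fact.out : p.Prime).ne_zero)
  set z := (x - y) / p ^ k with hz
  have hvz : Rat.padicValuation p z ≤ 1 := by
    rw [hz, map_div₀, map_pow]
    exact div_le_one_of_le₀ h zero_le
  refine ⟨z.num, z.den, ?_, ?_⟩
  · exact_mod_cast Rat.padicValuation_le_one_iff.mp hvz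
  · rw [Int.cast_natCast, Rat.num_div_den, hz, mul_div_cancel₀ _ hpk]

theorem padicValuation_mul_bernoulli_le_one (n : ℕ) :
    Rat.padicValuation p (p * bernoulli n) ≤ 1 := by
  induction n using Nat.strong_induction_on with
  | _ n ih =>
  rw [← sub_sub_cancel (∑ k ∈ range p, (k : ℚ) ^ n) (p * bernoulli n),
    sum_range_pow_sub_mul_bernoulli]
  refine Valuation.map_sub_le _ (by exact_mod_cast Rat.padicValuation_natCast_le_one _)
    (Valuation.map_sum_le _ fun i hi => ?_)
  have hfact := Nat.factorization_lt p (n - i).add_one_ne_zero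
  rw [map_mul, map_mul]
  exact mul_le_one' (mul_le_one' (ih i (mem_range.mp hi)) (Rat.padicValuation_natCast_le_one _))
    (by simpa using Rat.padicValuation_pow_div_succ_le (p := p) (m := n - i) (j := 0) (by omega))

theorem padicValuation_sum_range_pow_sub_mul_bernoulli_le (hp5 : 5 ≤ p) {n : ℕ} (hn : Even n)
    (hn4 : 4 ≤ n) :
    Rat.padicValuation p (∑ k ∈ range p, (k : ℚ) ^ n - p * bernoulli n) ≤
      Rat.padicValuation p p ^ 2 := by
  rw [sum_range_pow_sub_mul_bernoulli]
  refine Valuation.map_sum_le _ fun i hi => ?_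
  obtain rfl | hi : i = n - 1 ∨ i + 2 ≤ n := by rw [mem_range] at hi; omega
  · rw [bernoulli_eq_zero_of_odd (Nat.Even.sub_odd (by omega) hn odd_one) (by omega)]
    simp
  · rw [map_mul, map_mul]
    exact mul_le_of_le_one_of_le
      (mul_le_one' (padicValuation_mul_bernoulli_le_one i) (Rat.padicValuation_natCast_le_one _))
      (Rat.padicValuation_pow_div_succ_le (Nat.factorization_succ_add_two_le hp5 (by omega)))

end PadicValuation

theorem stmt_5 (p : ℕ) (hp : p.Prime) (hodd : Odd p) (hw : IsWilsonPrime p) :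
    ratCongr p 1 (bernoulli (2 * p - 2)) (bernoulli (p - 1)) := by
  have : Fact p.Prime := ⟨hp⟩
  have hp5 := hw.five_le hp hodd
  have hpowers : Rat.padicValuation p
      (∑ k ∈ range p, (k : ℚ) ^ (2 * p - 2) - ∑ k ∈ range p, (k : ℚ) ^ (p - 1)) ≤
        Rat.padicValuation p p ^ 2 := by
    simpa [← sum_sub_distrib] using
      Rat.padicValuation_intCast_le_pow_of_dvd (hw.sq_dvd_sum_pow_sub hp hodd)
  have hhigh := padicValuation_sum_range_pow_sub_mul_bernoulli_le hp5
    (n := 2 * p - 2) ⟨p - 1, by omega⟩ (by omega)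
  have hlow := padicValuation_sum_range_pow_sub_mul_bernoulli_le hp5
    (n := p - 1) (Nat.Odd.sub_odd hodd odd_one) (by omega)
  have hsplit : (p : ℚ) * (bernoulli (2 * p - 2) - bernoulli (p - 1)) =
      (∑ k ∈ range p, (k : ℚ) ^ (2 * p - 2) - ∑ k ∈ range p, (k : ℚ) ^ (p - 1)) -
        (∑ k ∈ range p, (k : ℚ) ^ (2 * p - 2) - p * bernoulli (2 * p - 2)) +
        (∑ k ∈ range p, (k : ℚ) ^ (p - 1) - p * bernoulli (p - 1)) := by ring
  apply ratCongr_of_padicValuation_sub_le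
  rw [pow_one, ← mul_le_mul_iff_right₀ (a := Rat.padicValuation p p) (by simp), ← map_mul, hsplit,
    ← sq]
  exact Valuation.map_add_le _ (Valuation.map_sub_le _ hpowers hhigh) hlow
end

section
/- Let p be a prime with p > 3. Then ∑_{a=1}^{p−1} q_p(a) ≡ B_{p−1} − 1 + 1/p (mod p²), i.e. the rational number ∑_{a=1}^{p−1} q_p(a) − (B_{p−1} − 1 + 1/p) equals p²·(a/b) for some integers a, b with p ∤ b. -/
open Finset

/-!
Multiplying by `p`, the claim becomes `∑_{a<p} a^(p-1) ≡ p B_{p-1} (mod p³)`. Faulhaber's formula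
gives `∑_{a<p} a^(p-1) = ∑_{i<p} B_i (p choose i) p^(p-1-i)`. The term `i = p - 1` is `p B_{p-1}`,
the term `i = p - 2` vanishes because `B_{p-2} = 0`, the term `i = 0` is `p^(p-1)`, and for
`0 < i < p - 2` the term is divisible by `p³` because `p ∣ (p choose i)` and, by von Staudt–Clausen,
`B_i` is `p`-integral.
-/

lemma sum_range_pow_pred_self (n : ℕ) :
    ∑ a ∈ range n, (a : ℚ) ^ (n - 1) =
      ∑ i ∈ range n, bernoulli i * n.choose i * (n : ℚ) ^ (n - 1 - i) := by
  rcases n with _ | n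
  · simp
  have hn : (n + 1 : ℚ) ≠ 0 := by positivity
  rw [Nat.add_sub_cancel, sum_range_pow]
  refine sum_congr rfl fun i hi ↦ ?_
  rw [show n + 1 - i = n - i + 1 by have := mem_range.mp hi; omega, pow_succ]
  push_cast
  field_simp

lemma fermatQuotient_mul_self {p a : ℕ} (hp : p.Prime) (ha : ¬ p ∣ a) :
    (fermatQuotient p a : ℚ) * p = (a : ℚ) ^ (p - 1) - 1 := by
  have hcop : IsCoprime (a : ℤ) p :=
    Nat.isCoprime_iff_coprime.mpr (hp.coprime_iff_not_dvd.mpr ha).symm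
  have hdvd : (p : ℤ) ∣ (a : ℤ) ^ (p - 1) - 1 :=
    (Int.ModEq.pow_card_sub_one_eq_one hp hcop).symm.dvd
  exact_mod_cast Int.ediv_mul_cancel hdvd

lemma sum_fermatQuotient_mul_self {p : ℕ} (hp : p.Prime) :
    (∑ a ∈ Icc 1 (p - 1), fermatQuotient p a : ℚ) * p =
      ∑ a ∈ range p, (a : ℚ) ^ (p - 1) - (p - 1) := by
  have hp2 := hp.two_le
  have hIcc : Icc 1 (p - 1) = (range p).erase 0 := by
    ext a
    simp only [mem_Icc, mem_erase, mem_range]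
    omega
  have hsum : ∑ a ∈ Icc 1 (p - 1), (fermatQuotient p a : ℚ) * p =
      ∑ a ∈ Icc 1 (p - 1), ((a : ℚ) ^ (p - 1) - 1) :=
    sum_congr rfl fun a ha ↦ fermatQuotient_mul_self hp <|
      Nat.not_dvd_of_pos_of_lt (mem_Icc.mp ha).1 (by have := (mem_Icc.mp ha).2; omega)
  rw [sum_mul, hsum, sum_sub_distrib, hIcc, sum_erase _ (by simp; omega),
    sum_const, card_erase_of_mem (mem_range.mpr hp.pos), card_range, nsmul_one,
    Nat.cast_sub hp.one_le, Nat.cast_one]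

section PadicNorm

variable {p : ℕ} [Fact p.Prime]

lemma padicNorm_prime_pow (n : ℕ) : padicNorm p ((p : ℚ) ^ n) = (p : ℚ) ^ (-(n : ℤ)) := by
  rw [IsAbsoluteValue.abv_pow (padicNorm p), padicNorm.padicNorm_p_of_prime, inv_pow, zpow_neg,
    zpow_natCast]

lemma padicNorm_le_one_iff_not_dvd_den {q : ℚ} : padicNorm p q ≤ 1 ↔ ¬ p ∣ q.den := by
  rw [← Rat.padicValuation_le_one_iff, ← Padic.norm_rat_le_one_iff_padicValuation_le_one,
    Padic.eq_padicNorm]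
  norm_cast

lemma ratCongr_of_padicNorm_sub_le {k : ℕ} {x y : ℚ}
    (h : padicNorm p (x - y) ≤ (p : ℚ) ^ (-(k : ℤ))) : ratCongr p k x y := by
  have hp0 : (p : ℚ) ≠ 0 := by exact_mod_cast (Fact.out : p.Prime).ne_zero
  set r := (x - y) / (p : ℚ) ^ k
  have hr : padicNorm p r ≤ 1 := by
    rwa [padicNorm.div, padicNorm_prime_pow, div_le_one (by positivity)]
  refine ⟨r.num, r.den, by exact_mod_cast padicNorm_le_one_iff_not_dvd_den.mp hr, ?_⟩
  rw [Int.cast_natCast, Rat.num_div_den, mul_div_cancel₀ _ (pow_ne_zero _ hp0)]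

lemma padicNorm_bernoulli_le_one {n : ℕ} (hn : ¬ (p - 1) ∣ n) :
    padicNorm p (bernoulli n) ≤ 1 := by
  obtain ⟨k, rfl | rfl⟩ := n.even_or_odd'
  · obtain ⟨T, hT⟩ := Bernoulli.vonStaudt_clausen k
    rw [eq_sub_of_add_eq hT.symm]
    refine padicNorm.sub.trans (max_le (padicNorm.of_int T) (padicNorm.sum_le' ?_ zero_le_one))
    intro q hq
    rw [mem_filter] at hq
    have hpq : ¬ p ∣ q := fun h ↦
      hn ((Nat.prime_dvd_prime_iff_eq Fact.out hq.2.1).mp h ▸ hq.2.2)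
    rw [padicNorm.div, padicNorm.one, (padicNorm.nat_eq_one_iff q).mpr hpq, div_one]
  · rcases k.eq_zero_or_pos with rfl | hk
    · have hp2 : ¬ p ∣ 2 := fun h ↦ by
        rw [(Nat.prime_dvd_prime_iff_eq Fact.out Nat.prime_two).mp h] at hn
        exact hn (one_dvd _)
      rw [bernoulli_one, padicNorm.div, padicNorm.neg, padicNorm.one,
        ← Nat.cast_ofNat (R := ℚ) (n := 2), (padicNorm.nat_eq_one_iff 2).mpr hp2, div_one]
    · rw [bernoulli_eq_zero_of_odd (odd_two_mul_add_one k) (by omega), padicNorm.zero]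
      exact zero_le_one

lemma padicNorm_bernoulli_mul_choose_mul_pow_le (hp5 : 5 ≤ p) {i : ℕ} (hi : i < p - 1) :
    padicNorm p (bernoulli i * p.choose i * (p : ℚ) ^ (p - 1 - i)) ≤ (p : ℚ) ^ (-3 : ℤ) := by
  have hp1 : (1 : ℚ) ≤ p := by exact_mod_cast (Fact.out : p.Prime).one_le
  rcases Nat.eq_zero_or_pos i with rfl | hi0
  · rw [bernoulli_zero, Nat.choose_zero_right, Nat.cast_one, one_mul, one_mul, Nat.sub_zero,
      padicNorm_prime_pow]
    exact zpow_le_zpow_right₀ hp1 (by omega)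
  by_cases hodd : i = p - 2
  · have : Odd (p - 2) := by
      obtain ⟨m, hm⟩ := (Fact.out : p.Prime).odd_of_ne_two (by omega)
      exact ⟨m - 1, by omega⟩
    rw [hodd, bernoulli_eq_zero_of_odd this (by omega), zero_mul, zero_mul, padicNorm.zero]
    positivity
  have hB : padicNorm p (bernoulli i) ≤ 1 :=
    padicNorm_bernoulli_le_one fun h ↦ by have := Nat.le_of_dvd hi0 h; omega
  have hC : padicNorm p (p.choose i : ℚ) ≤ (p : ℚ) ^ (-1 : ℤ) := by
    have hdvd : ((p ^ 1 : ℕ) : ℤ) ∣ (p.choose i : ℤ) := by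
      rw [pow_one]
      exact_mod_cast (Fact.out : p.Prime).dvd_choose_self hi0.ne' (by omega)
    simpa using padicNorm.dvd_iff_norm_le.mp hdvd
  calc padicNorm p (bernoulli i * p.choose i * (p : ℚ) ^ (p - 1 - i))
      = padicNorm p (bernoulli i) * padicNorm p (p.choose i : ℚ) *
          (p : ℚ) ^ (-((p - 1 - i : ℕ) : ℤ)) := by
        rw [padicNorm.mul, padicNorm.mul, padicNorm_prime_pow]
    _ ≤ 1 * (p : ℚ) ^ (-1 : ℤ) * (p : ℚ) ^ (-2 : ℤ) := by
        gcongr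
        · exact padicNorm.nonneg _
        · omega
    _ = (p : ℚ) ^ (-3 : ℤ) := by
        rw [one_mul, ← zpow_add₀ (by positivity)]
        norm_num

lemma padicNorm_sum_range_pow_sub_le (hp5 : 5 ≤ p) :
    padicNorm p (∑ a ∈ range p, (a : ℚ) ^ (p - 1) - p * bernoulli (p - 1)) ≤
      (p : ℚ) ^ (-3 : ℤ) := by
  rw [sum_range_pow_pred_self,
    show range p = range (p - 1 + 1) by rw [Nat.sub_add_cancel (by omega)], sum_range_succ,
    Nat.sub_self, pow_zero, mul_one, Nat.choose_symm_of_eq_add (by omega : p = p - 1 + 1),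
    Nat.choose_one_right, mul_comm (bernoulli _), add_sub_cancel_right]
  exact padicNorm.sum_le'
    (fun i hi ↦ padicNorm_bernoulli_mul_choose_mul_pow_le hp5 (mem_range.mp hi)) (by positivity)

end PadicNorm

theorem stmt_7 (p : ℕ) (hp : p.Prime) (hp3 : 3 < p) :
    ratCongr p 2 (((∑ a ∈ Icc 1 (p - 1), fermatQuotient p a : ℤ)) : ℚ)
      (bernoulli (p - 1) - 1 + 1 / (p : ℚ)) := by
  have := Fact.mk hp
  have hp5 : 5 ≤ p := by
    have : p ≠ 4 := by rintro rfl; norm_num at hp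
    omega
  have hp0 : (0 : ℚ) < p := by exact_mod_cast hp.pos
  have key : ((∑ a ∈ Icc 1 (p - 1), fermatQuotient p a : ℤ) - (bernoulli (p - 1) - 1 + 1 / p)) *
      p = ∑ a ∈ range p, (a : ℚ) ^ (p - 1) - p * bernoulli (p - 1) := by
    rw [sub_mul, Int.cast_sum, sum_fermatQuotient_mul_self hp]
    field_simp
    ring
  have hbound := padicNorm_sum_range_pow_sub_le hp5
  rw [← key, padicNorm.mul, padicNorm.padicNorm_p_of_prime, mul_inv_le_iff₀ hp0,
    ← zpow_add_one₀ hp0.ne'] at hbound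
  exact ratCongr_of_padicNorm_sub_le hbound
end

section
/- Let p be a prime with p > 3. Then W_p ≡ 1/p − B_{p−1}/(p−1) + B_{2p−2}/(2p−2) − (p/2)·(B_{p−1}/(p−1))² (mod p²) as rational numbers. -/
open Finset

/-!
Write `a ^ (p - 1) = 1 + p q_a` for `0 < a < p`, and `Q = ∑ q_a`, `Q₂ = ∑ q_a²`. Expanding
`∏ (1 + p q_a) = ((p - 1)!) ^ (p - 1) = (1 - p W_p) ^ (p - 1)` to second order in `p` gives Lerch's
congruence `2 W_p ≡ 2 (1 + p) Q - p (Q² + Q₂) (mod p²)`, which in terms of the power sums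
`S_k = ∑_{a < p} a ^ k` is a congruence modulo `p³` between `W_p`, `S_{p-1}` and `S_{2p-2}`.
Faulhaber's formula, with von Staudt–Clausen controlling the denominators of the `B_i`, gives
`S_k ≡ p B_k (mod p³)` for `k = p - 1, 2p - 2`; substituting and dividing by `2p (p - 1)²` gives
the claim.
-/

abbrev pIntegral (p : ℕ) [Fact p.Prime] : Subring ℚ := (Rat.padicValuation p).integer

section pIntegral

variable {p : ℕ} [Fact p.Prime]

theorem mem_pIntegral_iff {x : ℚ} : x ∈ pIntegral p ↔ ¬ p ∣ x.den :=
  Rat.padicValuation_le_one_iff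

theorem natCast_inv_mem_pIntegral {m : ℕ} (hm : ¬ p ∣ m) : (m : ℚ)⁻¹ ∈ pIntegral p := by
  rw [mem_pIntegral_iff, Rat.inv_natCast_den]
  split_ifs <;> simp_all

theorem ratCongr_of_sub_eq {k : ℕ} {x y z : ℚ} (hz : z ∈ pIntegral p)
    (h : x - y = p ^ k * z) : ratCongr p k x y :=
  ⟨z.num, z.den, by exact_mod_cast mem_pIntegral_iff.mp hz,
    by rw [h, Int.cast_natCast, Rat.num_div_den]⟩

/-- von Staudt–Clausen, localized at `p`. -/
theorem bernoulli_add_inv_mem_pIntegral {k : ℕ} (hk : 0 < k) :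
    bernoulli (2 * k) + (if (p - 1) ∣ 2 * k then (p : ℚ)⁻¹ else 0) ∈ pIntegral p := by
  obtain ⟨n, hn⟩ := Bernoulli.vonStaudt_clausen k
  set S := (range (2 * k + 2)).filter fun q ↦ q.Prime ∧ (q - 1) ∣ 2 * k
  have hrest : ∑ q ∈ S.erase p, (1 : ℚ) / q ∈ pIntegral p := by
    refine Subring.sum_mem _ fun q hq ↦ ?_
    obtain ⟨hqp, hq⟩ := mem_erase.mp hq
    rw [one_div]
    refine natCast_inv_mem_pIntegral fun h ↦ hqp ?_
    exact ((Nat.prime_dvd_prime_iff_eq Fact.out (mem_filter.mp hq).2.1).mp h).symm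
  have hsplit : (∑ q ∈ S, (1 : ℚ) / q) =
      (if (p - 1) ∣ 2 * k then (p : ℚ)⁻¹ else 0) + ∑ q ∈ S.erase p, (1 : ℚ) / q := by
    split_ifs with hdvd
    · have hpk : p - 1 ≤ 2 * k := Nat.le_of_dvd (by omega) hdvd
      have hpS : p ∈ S := mem_filter.mpr ⟨mem_range.mpr (by omega), Fact.out, hdvd⟩
      rw [← add_sum_erase _ _ hpS, one_div]
    · rw [zero_add, erase_eq_of_notMem fun h ↦ hdvd (mem_filter.mp h).2.2]
  have : bernoulli (2 * k) + (if (p - 1) ∣ 2 * k then (p : ℚ)⁻¹ else 0) =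
      n - ∑ q ∈ S.erase p, (1 : ℚ) / q := by
    rw [hn, hsplit]; ring
  rw [this]
  exact sub_mem (intCast_mem _ n) hrest

theorem bernoulli_mem_pIntegral {k : ℕ} (hk : ¬ (p - 1) ∣ k) : bernoulli k ∈ pIntegral p := by
  obtain ⟨m, rfl | rfl⟩ := Nat.even_or_odd' k
  · have hm : 0 < m := Nat.pos_of_ne_zero (by rintro rfl; simp at hk)
    simpa [hk] using bernoulli_add_inv_mem_pIntegral (p := p) hm
  · rcases m.eq_zero_or_pos with rfl | hm
    · have hp2 : ¬ p ∣ 2 := fun h ↦ hk (by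
        rw [(Nat.prime_dvd_prime_iff_eq Fact.out Nat.prime_two).mp h])
      rw [bernoulli_one, neg_div, one_div]
      exact neg_mem (by exact_mod_cast natCast_inv_mem_pIntegral hp2)
    · rw [bernoulli_eq_zero_of_odd (odd_two_mul_add_one m) (by omega)]
      exact zero_mem _

theorem mul_bernoulli_mem_pIntegral (k : ℕ) : (p : ℚ) * bernoulli k ∈ pIntegral p := by
  by_cases hk : (p - 1) ∣ k
  swap
  · exact mul_mem (natCast_mem _ p) (bernoulli_mem_pIntegral hk)
  obtain ⟨m, rfl | rfl⟩ := Nat.even_or_odd' k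
  · rcases m.eq_zero_or_pos with rfl | hm
    · simp
    have hp0 : (p : ℚ) ≠ 0 := by exact_mod_cast (Fact.out : p.Prime).ne_zero
    have := mul_mem (natCast_mem _ p) (bernoulli_add_inv_mem_pIntegral (p := p) hm)
    rw [if_pos hk, mul_add, mul_inv_cancel₀ hp0] at this
    simpa using sub_mem this (one_mem _)
  · rcases m.eq_zero_or_pos with rfl | hm
    · obtain rfl : p = 2 := by
        have := Nat.le_of_dvd one_pos hk
        have := (Fact.out : p.Prime).two_le
        omega
      norm_num [bernoulli_one]
    · rw [bernoulli_eq_zero_of_odd (odd_two_mul_add_one m) (by omega), mul_zero]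
      exact zero_mem _

theorem bernoulli_mul_pow_mem_pIntegral {i e : ℕ} (he : (p - 1) ∣ i → 0 < e) :
    bernoulli i * (p : ℚ) ^ e ∈ pIntegral p := by
  by_cases hi : (p - 1) ∣ i
  · obtain ⟨e, rfl⟩ := Nat.exists_eq_add_of_lt (he hi)
    rw [zero_add, pow_succ', ← mul_assoc, mul_comm _ (p : ℚ)]
    exact mul_mem (mul_bernoulli_mem_pIntegral i) (pow_mem (natCast_mem _ p) e)
  · exact mul_mem (bernoulli_mem_pIntegral hi) (pow_mem (natCast_mem _ p) e)

end pIntegral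

theorem sum_range_pow_eq_add_mul_bernoulli (n : ℕ) {k : ℕ} (hk : Even k) (hk2 : 2 < k) :
    ∑ a ∈ range n, (a : ℚ) ^ k =
      ∑ i ∈ range (k - 1), bernoulli i * (k + 1).choose i * n ^ (k + 1 - i) / (k + 1 : ℕ)
        + n * bernoulli k := by
  have hodd : bernoulli (k - 1) = 0 :=
    bernoulli_eq_zero_of_odd (Nat.Even.sub_odd (by omega) hk odd_one) (by omega)
  have hk1 : ((k + 1 : ℕ) : ℚ) ≠ 0 := by positivity
  rw [sum_range_pow, sum_range_succ, show k = k - 1 + 1 by omega, sum_range_succ,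
    show k - 1 + 1 = k by omega, hodd, Nat.choose_succ_self_right, show k + 1 - k = 1 by omega]
  push_cast
  field_simp
  ring

section Faulhaber

variable {p : ℕ} [Fact p.Prime]

theorem exists_sum_range_pow_sub_one_eq (hp5 : 5 ≤ p) :
    ∃ A ∈ pIntegral p, ∑ a ∈ range p, (a : ℚ) ^ (p - 1) = p * bernoulli (p - 1) + p ^ 3 * A := by
  have hp0 : (p : ℚ) ≠ 0 := by exact_mod_cast (Fact.out : p.Prime).ne_zero
  refine ⟨∑ i ∈ range (p - 2), bernoulli i * p.choose i * (p : ℚ) ^ (p - i) / p ^ 4, ?_, ?_⟩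
  · refine Subring.sum_mem _ fun i hi ↦ ?_
    rw [mem_range] at hi
    rcases i.eq_zero_or_pos with rfl | hi0
    · have : bernoulli 0 * p.choose 0 * (p : ℚ) ^ (p - 0) / p ^ 4 = bernoulli 0 * p ^ (p - 4) := by
        rw [show p - 0 = p - 4 + 4 by omega, pow_add]; field_simp; simp
      rw [this]
      exact bernoulli_mul_pow_mem_pIntegral fun _ ↦ by omega
    · obtain ⟨c, hc⟩ := (Fact.out : p.Prime).dvd_choose_self (by omega) (by omega : i < p)
      have : bernoulli i * p.choose i * (p : ℚ) ^ (p - i) / p ^ 4 =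
          bernoulli i * p ^ (p - 3 - i) * c := by
        rw [hc, show p - i = p - 3 - i + 3 by omega, pow_add]; push_cast; field_simp
      rw [this]
      refine mul_mem (bernoulli_mul_pow_mem_pIntegral fun h ↦ ?_) (natCast_mem _ c)
      exact absurd (Nat.le_of_dvd hi0 h) (by omega)
  · rw [sum_range_pow_eq_add_mul_bernoulli p ((Fact.out : p.Prime).even_sub_one (by omega))
      (by omega), show p - 1 - 1 = p - 2 by omega, show p - 1 + 1 = p by omega, mul_sum, add_comm]
    congr 1
    refine sum_congr rfl fun i _ ↦ ?_
    field_simp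

theorem exists_sum_range_pow_two_mul_sub_two_eq (hp5 : 5 ≤ p) :
    ∃ A ∈ pIntegral p,
      ∑ a ∈ range p, (a : ℚ) ^ (2 * p - 2) = p * bernoulli (2 * p - 2) + p ^ 3 * A := by
  have hp0 : (p : ℚ) ≠ 0 := by exact_mod_cast (Fact.out : p.Prime).ne_zero
  refine ⟨∑ i ∈ range (2 * p - 3), bernoulli i * (2 * p - 1).choose i * (p : ℚ) ^ (2 * p - 4 - i)
    * ((2 * p - 1 : ℕ) : ℚ)⁻¹, ?_, ?_⟩
  · refine Subring.sum_mem _ fun i hi ↦ ?_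
    rw [mem_range] at hi
    have hunit : ¬ p ∣ 2 * p - 1 := by
      intro h
      have : p ∣ 1 := by
        simpa [show 2 * p - (2 * p - 1) = 1 by omega] using Nat.dvd_sub (dvd_mul_left p 2) h
      exact (Fact.out : p.Prime).one_lt.ne' (Nat.dvd_one.mp this)
    refine mul_mem ?_ (natCast_inv_mem_pIntegral hunit)
    rw [mul_right_comm]
    refine mul_mem (bernoulli_mul_pow_mem_pIntegral fun h ↦ ?_) (natCast_mem _ _)
    obtain ⟨c, rfl⟩ := h
    rcases c with _ | _ | c
    · omega
    · omega
    · have := Nat.mul_le_mul_left (p - 1) (show 2 ≤ c + 1 + 1 by omega)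
      omega
  · rw [sum_range_pow_eq_add_mul_bernoulli p ⟨p - 1, by omega⟩ (by omega),
      show 2 * p - 2 - 1 = 2 * p - 3 by omega, show 2 * p - 2 + 1 = 2 * p - 1 by omega, mul_sum,
      add_comm]
    congr 1
    refine sum_congr rfl fun i hi ↦ ?_
    rw [mem_range] at hi
    rw [show 2 * p - 1 - i = 2 * p - 4 - i + 3 by omega, pow_add]
    field_simp

end Faulhaber

theorem pow_three_dvd_two_mul_prod_one_add_mul {ι R : Type*} [CommRing R] (P : R) (x : ι → R)
    (s : Finset ι) :
    P ^ 3 ∣ 2 * ∏ a ∈ s, (1 + P * x a)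
      - (2 + 2 * P * ∑ a ∈ s, x a + P ^ 2 * ((∑ a ∈ s, x a) ^ 2 - ∑ a ∈ s, x a ^ 2)) := by
  classical
  induction s using Finset.cons_induction with
  | empty => simp
  | cons a s ha ih =>
    obtain ⟨c, hc⟩ := ih
    refine ⟨(1 + P * x a) * c + x a * ((∑ b ∈ s, x b) ^ 2 - ∑ b ∈ s, x b ^ 2), ?_⟩
    rw [prod_cons, sum_cons, sum_cons]
    linear_combination (1 + P * x a) * hc

theorem pow_three_dvd_two_mul_one_add_mul_pow {R : Type*} [CommRing R] (P y : R) (n : ℕ) :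
    P ^ 3 ∣ 2 * (1 + P * y) ^ n - (2 + 2 * n * P * y + P ^ 2 * (n ^ 2 - n) * y ^ 2) := by
  have := pow_three_dvd_two_mul_prod_one_add_mul P (fun _ ↦ y) (range n)
  simp only [prod_const, sum_const, card_range, nsmul_eq_mul] at this
  convert this using 2
  ring

section Wilson

variable {p : ℕ} [Fact p.Prime]

theorem factorial_sub_one_eq_mul_wilsonQuotient_sub_one :
    ((p - 1).factorial : ℤ) = p * wilsonQuotient p - 1 := by
  have hdvd : (p : ℤ) ∣ (p - 1).factorial + 1 := by
    rw [← ZMod.intCast_zmod_eq_zero_iff_dvd]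
    push_cast
    rw [ZMod.wilsons_lemma, neg_add_cancel]
  rw [wilsonQuotient, Int.mul_ediv_cancel' hdvd, add_sub_cancel_right]

theorem pow_sub_one_eq_one_add_mul_fermatQuotient {a : ℕ} (ha : a ∈ Ico 1 p) :
    (a : ℤ) ^ (p - 1) = 1 + p * fermatQuotient p a := by
  have ha0 : (a : ZMod p) ≠ 0 := by
    rw [Ne, ZMod.natCast_eq_zero_iff]
    exact fun h ↦ absurd (Nat.le_of_dvd (mem_Ico.mp ha).1 h) (by simp at ha; omega)
  have hdvd : (p : ℤ) ∣ (a : ℤ) ^ (p - 1) - 1 := by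
    rw [← ZMod.intCast_zmod_eq_zero_iff_dvd]
    push_cast
    rw [ZMod.pow_card_sub_one_eq_one ha0, sub_self]
  rw [fermatQuotient, Int.mul_ediv_cancel' hdvd, add_sub_cancel]

theorem two_mul_wilsonQuotient_modEq (hp2 : p ≠ 2) :
    2 * wilsonQuotient p ≡
      2 * (1 + p) * ∑ a ∈ Ico 1 p, fermatQuotient p a
        - p * ((∑ a ∈ Ico 1 p, fermatQuotient p a) ^ 2 + ∑ a ∈ Ico 1 p, fermatQuotient p a ^ 2)
      [ZMOD p ^ 2] := by
  set W := wilsonQuotient p with hW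
  set q := fermatQuotient p
  set Q := ∑ a ∈ Ico 1 p, q a
  set Q₂ := ∑ a ∈ Ico 1 p, q a ^ 2
  have hp3 : 3 ≤ p := by have := (Fact.out : p.Prime).two_le; omega
  have hp0 : (p : ℤ) ≠ 0 := by exact_mod_cast (Fact.out : p.Prime).ne_zero
  have hfermat : ((p - 1).factorial : ℤ) ^ (p - 1) = ∏ a ∈ Ico 1 p, (1 + p * q a) := by
    rw [← prod_congr rfl fun a ha ↦ pow_sub_one_eq_one_add_mul_fermatQuotient ha, prod_pow,
      ← prod_Ico_id_eq_factorial, Nat.sub_add_cancel (by omega), Nat.cast_prod]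
  have hwilson : ((p - 1).factorial : ℤ) ^ (p - 1) = (1 + p * -W) ^ (p - 1) := by
    rw [factorial_sub_one_eq_mul_wilsonQuotient_sub_one, ← hW,
      ← ((Fact.out : p.Prime).even_sub_one hp2).neg_pow]
    ring_nf
  obtain ⟨c₁, hc₁⟩ := pow_three_dvd_two_mul_prod_one_add_mul (p : ℤ) q (Ico 1 p)
  obtain ⟨c₂, hc₂⟩ := pow_three_dvd_two_mul_one_add_mul_pow (p : ℤ) (-W) (p - 1)
  rw [← hfermat] at hc₁
  rw [← hwilson, Nat.cast_sub (by omega), Nat.cast_one] at hc₂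
  have hE : 2 * Q + p * (Q ^ 2 - Q₂) + 2 * (p - 1) * W - p * (p - 1) * (p - 2) * W ^ 2
      = p ^ 2 * (c₂ - c₁) :=
    mul_left_cancel₀ hp0 (by linear_combination hc₂ - hc₁)
  have hWQ : (p : ℤ) ∣ W - Q := by
    have h2 : (p : ℤ) ∣ 2 * (W - Q) :=
      ⟨Q ^ 2 - Q₂ + 2 * W - (p - 1) * (p - 2) * W ^ 2 - p * (c₂ - c₁), by linear_combination -hE⟩
    refine (Int.Prime.dvd_mul' (Fact.out : p.Prime) h2).resolve_left fun h ↦ hp2 ?_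
    exact (Nat.prime_dvd_prime_iff_eq Fact.out Nat.prime_two).mp (by exact_mod_cast h)
  obtain ⟨v, hv⟩ := hWQ
  refine Int.modEq_iff_dvd.mpr ⟨c₂ - c₁ - 2 * v + 2 * v * (W + Q) + (p - 3) * W ^ 2, ?_⟩
  linear_combination hE + (2 * p * (W + Q) - 2 * p) * hv

theorem powerSum_wilsonQuotient_modEq_zero (hp2 : p ≠ 2) :
    2 * (p - 1) ^ 2 * (p * wilsonQuotient p - 1) + 2 * (p - 1) * ∑ a ∈ Ico 1 p, (a : ℤ) ^ (p - 1)
      - (p - 1) * ∑ a ∈ Ico 1 p, (a : ℤ) ^ (2 * p - 2) + (∑ a ∈ Ico 1 p, (a : ℤ) ^ (p - 1)) ^ 2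
      ≡ 0 [ZMOD p ^ 3] := by
  set q := fermatQuotient p
  set Q := ∑ a ∈ Ico 1 p, q a
  set Q₂ := ∑ a ∈ Ico 1 p, q a ^ 2
  have hcard : ((Ico 1 p).card : ℤ) = p - 1 := by
    rw [Nat.card_Ico, Nat.cast_sub (Fact.out : p.Prime).one_le, Nat.cast_one]
  have hS₁ : ∑ a ∈ Ico 1 p, (a : ℤ) ^ (p - 1) = (p - 1) + p * Q := by
    rw [sum_congr rfl fun a ha ↦ pow_sub_one_eq_one_add_mul_fermatQuotient ha, sum_add_distrib,
      sum_const, nsmul_one, hcard, mul_sum]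
  have hS₂ : ∑ a ∈ Ico 1 p, (a : ℤ) ^ (2 * p - 2) = (p - 1) + 2 * p * Q + p ^ 2 * Q₂ := by
    have h (a : ℕ) (ha : a ∈ Ico 1 p) :
        (a : ℤ) ^ (2 * p - 2) = 1 + 2 * p * q a + p ^ 2 * q a ^ 2 := by
      rw [show 2 * p - 2 = (p - 1) * 2 by omega, pow_mul,
        pow_sub_one_eq_one_add_mul_fermatQuotient ha]
      ring
    rw [sum_congr rfl h, sum_add_distrib, sum_add_distrib, sum_const, nsmul_one, hcard, mul_sum,
      mul_sum]
  obtain ⟨n, hn⟩ := (two_mul_wilsonQuotient_modEq hp2).dvd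
  refine Int.modEq_iff_dvd.mpr
    ⟨(p - 1) ^ 2 * n - 2 * (p - 1) * Q - (2 - p) * Q ^ 2 - (1 - p) * Q₂, ?_⟩
  rw [hS₁, hS₂]
  linear_combination (p * (p - 1) ^ 2 : ℤ) * hn

end Wilson

theorem ratCongr_two_of_eq_pow_three_mul {p : ℕ} [Fact p.Prime] (hp2 : p ≠ 2) {W β γ A₁ A₂ : ℚ}
    {M : ℤ} (hβ : p * β ∈ pIntegral p) (hA₁ : A₁ ∈ pIntegral p) (hA₂ : A₂ ∈ pIntegral p)
    (h : 2 * (p - 1) ^ 2 * (p * W - 1) + 2 * (p - 1) * (p * β + p ^ 3 * A₁)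
      - (p - 1) * (p * γ + p ^ 3 * A₂) + (p * β + p ^ 3 * A₁) ^ 2 = p ^ 3 * M) :
    ratCongr p 2 W (1 / p - β / (p - 1) + γ / (2 * p - 2) - p / 2 * (β / (p - 1)) ^ 2) := by
  have hp : p.Prime := Fact.out
  have hp1 : (p : ℚ) - 1 ∈ pIntegral p := sub_mem (natCast_mem _ p) (one_mem _)
  have hY : M - 2 * (p - 1) * A₁ + (p - 1) * A₂ - A₁ * (2 * (p * β) + p ^ 3 * A₁) ∈ pIntegral p :=
    sub_mem (add_mem (sub_mem (intCast_mem _ M) (mul_mem (mul_mem (ofNat_mem _ 2) hp1) hA₁))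
      (mul_mem hp1 hA₂)) (mul_mem hA₁ (add_mem (mul_mem (ofNat_mem _ 2) hβ)
        (mul_mem (pow_mem (natCast_mem _ p) 3) hA₁)))
  have hunit : ¬ p ∣ 2 * (p - 1) ^ 2 := by
    rw [hp.dvd_mul, or_iff_right fun h ↦ hp2 ((Nat.prime_dvd_prime_iff_eq hp Nat.prime_two).mp h)]
    have := hp.two_le
    exact fun h ↦ Nat.not_dvd_of_pos_of_lt (by omega) (by omega) (hp.dvd_of_dvd_pow h)
  -- `h` divided by `2 p (p - 1)²` is the claim
  refine ratCongr_of_sub_eq (mul_mem hY (natCast_inv_mem_pIntegral hunit)) ?_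
  have hp0 : (p : ℚ) ≠ 0 := by exact_mod_cast hp.ne_zero
  have hp1' : (p : ℚ) - 1 ≠ 0 := sub_ne_zero.mpr (by exact_mod_cast hp.one_lt.ne')
  push_cast [Nat.cast_sub hp.one_le]
  field_simp
  linear_combination h

theorem stmt_15 (p : ℕ) (hp : p.Prime) (hp3 : 3 < p) :
    ratCongr p 2 ((wilsonQuotient p : ℚ))
      (1 / (p : ℚ) - bernoulli (p - 1) / ((p : ℚ) - 1)
        + bernoulli (2 * p - 2) / (2 * (p : ℚ) - 2)
        - (p : ℚ) / 2 * (bernoulli (p - 1) / ((p : ℚ) - 1)) ^ 2) := by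
  have := Fact.mk hp
  have hp5 : 5 ≤ p := by
    by_contra h
    interval_cases p
    norm_num at hp
  obtain ⟨M, hM⟩ := (powerSum_wilsonQuotient_modEq_zero (p := p) (by omega)).symm.dvd
  obtain ⟨A₁, hA₁, h₁⟩ := exists_sum_range_pow_sub_one_eq hp5
  obtain ⟨A₂, hA₂, h₂⟩ := exists_sum_range_pow_two_mul_sub_two_eq hp5
  rw [sum_range_eq_add_Ico _ hp.pos, Nat.cast_zero, zero_pow (by omega), zero_add] at h₁ h₂
  have hMℚ := congrArg (Int.cast : ℤ → ℚ) hM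
  push_cast [h₁, h₂, sub_zero] at hMℚ
  exact ratCongr_two_of_eq_pow_three_mul (by omega) (mul_bernoulli_mem_pIntegral _) hA₁ hA₂ hMℚ
end
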